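/- For a bounded k-form ω on ℝⁿ and r ≥ 1, the norm ‖ω‖_{B^r} = max{|ω|_{B⁰},...,|ω|_{B^r}} (defined via finite differences) equals the norm ‖ω‖_{C^{r−1+Lip}} = max{|ω|_{C⁰},...,|ω|_{C^{r−1}}, |ω|_{L^r}} (defined via suprema of directional derivatives of orders up to r−1 and the Lipschitz constant of the (r−1)-th derivatives); in particular one is finite iff the other is. -/

import Mathlib

/-! Pointed chains: finitely supported functions from points of `E` to "k-vectors" in `V`,
difference chains, and the `B^r` norms of J. Harrison's theory of differential chains. -/

open Finsupp

variable {E V : Type*} [NormedAddCommGroup E] [NormedSpace ℝ E]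
  [NormedAddCommGroup V] [NormedSpace ℝ V]

/-- The difference chain `Δ^j_U (p; α)`, for a list `U = [u₁,…,u_j]` of vectors. -/
noncomputable def diffChain : List E → E → V → (E →₀ V)
  | [], p, α => Finsupp.single p α
  | u :: U, p, α => Finsupp.mapDomain (· + u) (diffChain U p α) - diffChain U p α

/-- The weight `|Δ^j_U(p;α)|_j := ‖u₁‖⋯‖u_j‖‖α‖` of a difference chain. -/
noncomputable def dweight (U : List E) (α : V) : ℝ := (U.map fun u => ‖u‖).prod * ‖α‖

/-- The `r`-norm `‖A‖_{B^r}` on pointed chains: the infimum of `Σᵢ |Δ^{jᵢ}_{Uᵢ}(pᵢ;αᵢ)|_{jᵢ}`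
over all decompositions `A = Σᵢ Δ^{jᵢ}_{Uᵢ}(pᵢ;αᵢ)` with all `jᵢ ≤ r`. -/
noncomputable def Bnorm (r : ℕ) (A : E →₀ V) : ℝ :=
  sInf {s : ℝ | ∃ L : List (List E × E × V),
    (∀ t ∈ L, t.1.length ≤ r) ∧
    A = (L.map fun t => diffChain t.1 t.2.1 t.2.2).sum ∧
    s = (L.map fun t => dweight t.1 t.2.2).sum}

/-- Evaluation (integration) of a `k`-form `ω` (as a function of a point and a `k`-vector)
on a pointed chain `A`: `ω(Σ(pᵢ;αᵢ)) = Σ ω(pᵢ;αᵢ)`. -/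
noncomputable def pairF (ω : E → V → ℝ) (A : E →₀ V) : ℝ := A.sum fun p α => ω p α

/-- `C` is a `B^r`-bound for the form `ω`: `|ω(Δ^j_U(p;α))| ≤ C·‖u₁‖⋯‖u_j‖‖α‖` for all
difference chains of order `j ≤ r`.  Thus `‖ω‖_{B^r} = max{|ω|_{B⁰},…,|ω|_{B^r}}` is the
least such `C ≥ 0`. -/
def IsBBound (r : ℕ) (ω : E → V → ℝ) (C : ℝ) : Prop :=
  ∀ (U : List E) (p : E) (α : V), U.length ≤ r →
    |pairF ω (diffChain U p α)| ≤ C * dweight U α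

/-- `C` is a `C^{r−1+Lip}`-bound for the (continuous-linear-functional valued) form `ω`:
`ω` is `C^{r−1}`, all its directional derivatives of order `j ≤ r−1` are bounded by `C`
(on unit directions and unit `k`-vectors), and its `(r−1)`-th directional derivatives are
Lipschitz with constant `C`.  Thus `‖ω‖_{C^{r−1+Lip}}` is the least such `C ≥ 0`. -/
def IsCBound (r : ℕ) (ω : E → V →L[ℝ] ℝ) (C : ℝ) : Prop :=
  ContDiff ℝ (r - 1 : ℕ) ω ∧
  (∀ j : ℕ, j ≤ r - 1 → ∀ p : E, ‖iteratedFDeriv ℝ j ω p‖ ≤ C) ∧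
  (∀ p q : E,
    ‖iteratedFDeriv ℝ (r - 1) ω p - iteratedFDeriv ℝ (r - 1) ω q‖ ≤ C * ‖p - q‖)

/-! Evaluating a form on the difference chain `Δ^j_U(p;α)` gives `(Δ_U ω)(p) α`, where `Δ_U` is
the iterated forward difference along the vectors of `U`; so a `B^r` bound is a bound
`‖Δ_U ω (p)‖ ≤ C ∏ ‖uᵢ‖` for all `|U| ≤ r`. Such a bound of order `m + 1` for `f` gives one of
order `m` for `fderiv f`: `fderiv f x v` is the limit of `2ⁿ Δ_{2⁻ⁿ v} f x`, and appending
`2⁻ⁿ v` to `U` costs the factor `‖2⁻ⁿ v‖`. Conversely the mean value theorem raises the order by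
one. Differentiability itself comes from the bound of order two: the dyadic quotients
`2ⁿ Δ_{2⁻ⁿ v} f x` are Cauchy, and additive in `v` in the limit, because consecutive quotients,
and the additivity defects, are `2ⁿ` times second differences at scale `2⁻ⁿ`. -/

open Filter Topology Asymptotics fwdDiff

section IteratedFwdDiff

variable {M G : Type*} [AddCommMonoid M] [AddCommGroup G]

def iteratedFwdDiff (U : List M) (f : M → G) : M → G := U.foldr fwdDiff f

@[simp] lemma iteratedFwdDiff_nil (f : M → G) : iteratedFwdDiff [] f = f := rfl

lemma iteratedFwdDiff_cons (u : M) (U : List M) (f : M → G) :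
    iteratedFwdDiff (u :: U) f = Δ_[u] (iteratedFwdDiff U f) := rfl

lemma iteratedFwdDiff_append_singleton (U : List M) (w : M) (f : M → G) :
    iteratedFwdDiff (U ++ [w]) f = iteratedFwdDiff U (Δ_[w] f) :=
  List.foldr_append

lemma iteratedFwdDiff_comp_add_right (U : List M) (f : M → G) (m : M) :
    iteratedFwdDiff U (fun x => f (x + m)) = fun y => iteratedFwdDiff U f (y + m) := by
  induction U with
  | nil => rfl
  | cons u U ih => funext y; rw [iteratedFwdDiff_cons, ih, fwdDiff_comp_add]; rfl

lemma map_iteratedFwdDiff {G' Φ : Type*} [AddCommGroup G'] [FunLike Φ G G']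
    [AddMonoidHomClass Φ G G'] (φ : Φ) (U : List M) (f : M → G) (y : M) :
    φ (iteratedFwdDiff U f y) = iteratedFwdDiff U (fun x => φ (f x)) y := by
  induction U generalizing y with
  | nil => rfl
  | cons u U ih => simp only [iteratedFwdDiff_cons, fwdDiff, map_sub, ih]

lemma tendsto_iteratedFwdDiff [TopologicalSpace G] [IsTopologicalAddGroup G] {ι : Type*}
    {l : Filter ι} {g : ι → M → G} {f : M → G} (hg : ∀ x, Tendsto (g · x) l (𝓝 (f x)))
    (U : List M) (y : M) :
    Tendsto (fun i => iteratedFwdDiff U (g i) y) l (𝓝 (iteratedFwdDiff U f y)) := by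
  induction U generalizing y with
  | nil => exact hg y
  | cons u U ih => exact (ih (y + u)).sub (ih y)

end IteratedFwdDiff

section Calculus

variable {X F : Type*} [NormedAddCommGroup X] [NormedSpace ℝ X]
  [NormedAddCommGroup F] [NormedSpace ℝ F]

lemma hasFDerivAt_iteratedFwdDiff {f : X → F} {f' : X → X →L[ℝ] F}
    (hf : ∀ x, HasFDerivAt f (f' x) x) (U : List X) (x : X) :
    HasFDerivAt (iteratedFwdDiff U f) (iteratedFwdDiff U f' x) x := by
  induction U generalizing x with
  | nil => exact hf x
  | cons u U ih => exact ((hasFDerivAt_comp_add_right u).2 (ih (x + u))).sub (ih x)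

lemma norm_fwdDiff_le_of_hasFDerivAt {g : X → F} {g' : X → X →L[ℝ] F} {B : ℝ}
    (hg : ∀ x, HasFDerivAt g (g' x) x) (hB : ∀ x, ‖g' x‖ ≤ B) (u p : X) :
    ‖Δ_[u] g p‖ ≤ B * ‖u‖ := by
  simpa [fwdDiff] using convex_univ.norm_image_sub_le_of_norm_hasFDerivWithin_le
    (fun x _ => (hg x).hasFDerivWithinAt) (fun x _ => hB x) (Set.mem_univ p)
    (Set.mem_univ (p + u))

end Calculus

section SecondDifferences

variable {X F : Type*} [NormedAddCommGroup X] [NormedSpace ℝ X]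
  [NormedAddCommGroup F] [NormedSpace ℝ F] {f : X → F} {A B : ℝ}

noncomputable def dyadicDiffQuotient (f : X → F) (x v : X) (n : ℕ) : F :=
  (2 : ℝ) ^ n • Δ_[((2 : ℝ) ^ n)⁻¹ • v] f x

lemma dist_dyadicDiffQuotient_succ_le (h2 : ∀ x u v, ‖Δ_[u] (Δ_[v] f) x‖ ≤ B * ‖u‖ * ‖v‖)
    (x v : X) (n : ℕ) :
    dist (dyadicDiffQuotient f x v n) (dyadicDiffQuotient f x v (n + 1)) ≤
      B * ‖v‖ ^ 2 / 2 / 2 / 2 ^ n := by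
  set w : X := ((2 : ℝ) ^ (n + 1))⁻¹ • v
  have hw : ((2 : ℝ) ^ n)⁻¹ • v = w + w := by
    rw [← two_smul ℝ w, smul_smul, pow_succ]
    congr 1
    field_simp
  have key : dyadicDiffQuotient f x v n - dyadicDiffQuotient f x v (n + 1) =
      (2 : ℝ) ^ n • Δ_[w] (Δ_[w] f) x := by
    simp only [dyadicDiffQuotient, fwdDiff, hw, ← add_assoc]
    rw [show ((2 : ℝ) ^ (n + 1))⁻¹ • v = w from rfl, pow_succ]
    module
  have hnw : ‖w‖ = ‖v‖ / 2 ^ (n + 1) := by simp [w, norm_smul, div_eq_inv_mul]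
  rw [dist_eq_norm, key, norm_smul, norm_pow, Real.norm_two]
  calc 2 ^ n * ‖Δ_[w] (Δ_[w] f) x‖ ≤ 2 ^ n * (B * ‖w‖ * ‖w‖) := by gcongr; exact h2 x w w
    _ = B * ‖v‖ ^ 2 / 2 / 2 / 2 ^ n := by rw [hnw]; field_simp; ring

noncomputable def dyadicDeriv (f : X → F) (x v : X) : F :=
  limUnder atTop (dyadicDiffQuotient f x v)

variable [CompleteSpace F]

lemma tendsto_dyadicDiffQuotient (h2 : ∀ x u v, ‖Δ_[u] (Δ_[v] f) x‖ ≤ B * ‖u‖ * ‖v‖)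
    (x v : X) : Tendsto (dyadicDiffQuotient f x v) atTop (𝓝 (dyadicDeriv f x v)) :=
  (cauchySeq_of_le_geometric_two (dist_dyadicDiffQuotient_succ_le h2 x v)).tendsto_limUnder

lemma norm_fwdDiff_sub_dyadicDeriv_le (h2 : ∀ x u v, ‖Δ_[u] (Δ_[v] f) x‖ ≤ B * ‖u‖ * ‖v‖)
    (x v : X) : ‖Δ_[v] f x - dyadicDeriv f x v‖ ≤ B * ‖v‖ ^ 2 / 2 := by
  simpa [dyadicDiffQuotient, dist_eq_norm] using dist_le_of_le_geometric_two_of_tendsto₀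
    (dist_dyadicDiffQuotient_succ_le h2 x v) (tendsto_dyadicDiffQuotient h2 x v)

lemma dyadicDeriv_add (h2 : ∀ x u v, ‖Δ_[u] (Δ_[v] f) x‖ ≤ B * ‖u‖ * ‖v‖) (x u v : X) :
    dyadicDeriv f x (u + v) = dyadicDeriv f x u + dyadicDeriv f x v := by
  set q := dyadicDiffQuotient f x
  have hlim := ((tendsto_dyadicDiffQuotient h2 x (u + v)).sub
    (tendsto_dyadicDiffQuotient h2 x u)).sub (tendsto_dyadicDiffQuotient h2 x v)
  have hzero : Tendsto (fun n => q (u + v) n - q u n - q v n) atTop (𝓝 0) := by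
    refine squeeze_zero_norm (a := fun n : ℕ => B * ‖u‖ * ‖v‖ * ((2 : ℝ) ^ n)⁻¹) (fun n => ?_) ?_
    · set s : ℝ := ((2 : ℝ) ^ n)⁻¹
      have key : q (u + v) n - q u n - q v n = (2 : ℝ) ^ n • Δ_[s • u] (Δ_[s • v] f) x := by
        simp only [q, dyadicDiffQuotient, fwdDiff, smul_add, ← add_assoc]
        module
      rw [key, norm_smul, norm_pow, Real.norm_two]
      calc 2 ^ n * ‖Δ_[s • u] (Δ_[s • v] f) x‖ ≤ 2 ^ n * (B * ‖s • u‖ * ‖s • v‖) := by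
            gcongr; exact h2 x _ _
        _ = B * ‖u‖ * ‖v‖ * s := by
            simp only [norm_smul, s, norm_inv, norm_pow, Real.norm_two]; field_simp
    · simpa using (tendsto_inv_atTop_zero.comp
        (tendsto_pow_atTop_atTop_of_one_lt one_lt_two)).const_mul (B * ‖u‖ * ‖v‖)
  have := tendsto_nhds_unique hlim hzero
  rwa [sub_sub, sub_eq_zero] at this

lemma norm_dyadicDeriv_le (h1 : ∀ x v, ‖Δ_[v] f x‖ ≤ A * ‖v‖)
    (h2 : ∀ x u v, ‖Δ_[u] (Δ_[v] f) x‖ ≤ B * ‖u‖ * ‖v‖) (x v : X) :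
    ‖dyadicDeriv f x v‖ ≤ A * ‖v‖ := by
  refine le_of_tendsto' (tendsto_dyadicDiffQuotient h2 x v).norm fun n => ?_
  calc ‖dyadicDiffQuotient f x v n‖ ≤ 2 ^ n * (A * ‖((2 : ℝ) ^ n)⁻¹ • v‖) := by
        rw [dyadicDiffQuotient, norm_smul, norm_pow, Real.norm_two]; gcongr; exact h1 x _
    _ = A * ‖v‖ := by rw [norm_smul, norm_inv, norm_pow, Real.norm_two]; field_simp

theorem differentiable_of_norm_fwdDiff_le (h1 : ∀ x v, ‖Δ_[v] f x‖ ≤ A * ‖v‖)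
    (h2 : ∀ x u v, ‖Δ_[u] (Δ_[v] f) x‖ ≤ B * ‖u‖ * ‖v‖) : Differentiable ℝ f := by
  intro x
  let L : X →+ F := AddMonoidHom.mk' (dyadicDeriv f x) (dyadicDeriv_add h2 x)
  refine ⟨L.toRealLinearMap (AddMonoidHomClass.continuous_of_bound L A
    (norm_dyadicDeriv_le h1 h2 x)), ?_⟩
  rw [hasFDerivAt_iff_isLittleO_nhds_zero]
  refine IsBigO.trans_isLittleO (g := fun v : X => ‖v‖ ^ 2) ?_ (isLittleO_norm_pow_id one_lt_two)
  refine IsBigO.of_bound (B / 2) (Eventually.of_forall fun v => ?_)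
  simpa [L, fwdDiff, div_mul_eq_mul_div] using norm_fwdDiff_sub_dyadicDeriv_le h2 x v

end SecondDifferences

section FwdDiffBound

variable {X F G : Type*} [NormedAddCommGroup X] [NormedAddCommGroup F] [NormedAddCommGroup G]
  {f : X → F} {m : ℕ} {C : ℝ}

def IsFwdDiffBound (m : ℕ) (f : X → F) (C : ℝ) : Prop :=
  ∀ U : List X, U.length ≤ m → ∀ p, ‖iteratedFwdDiff U f p‖ ≤ C * (U.map (‖·‖)).prod

lemma IsFwdDiffBound.mono {n : ℕ} (h : IsFwdDiffBound m f C) (hnm : n ≤ m) :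
    IsFwdDiffBound n f C :=
  fun U hU => h U (hU.trans hnm)

lemma IsFwdDiffBound.norm_le (h : IsFwdDiffBound m f C) (p : X) : ‖f p‖ ≤ C := by
  simpa using h [] (Nat.zero_le m) p

lemma IsFwdDiffBound.nonneg (h : IsFwdDiffBound m f C) : 0 ≤ C :=
  (norm_nonneg _).trans (h.norm_le 0)

lemma isFwdDiffBound_one_iff :
    IsFwdDiffBound 1 f C ↔ (∀ p, ‖f p‖ ≤ C) ∧ ∀ p q, ‖f p - f q‖ ≤ C * ‖p - q‖ := by
  refine ⟨fun h => ⟨h.norm_le, fun p q => ?_⟩, fun ⟨h0, h1⟩ U hU p => ?_⟩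
  · simpa [iteratedFwdDiff_cons, fwdDiff] using h [p - q] le_rfl q
  · match U, hU with
    | [], _ => simpa using h0 p
    | [u], _ => simpa [iteratedFwdDiff_cons, fwdDiff] using h1 (p + u) p

lemma IsFwdDiffBound.continuous (h : IsFwdDiffBound (m + 1) f C) : Continuous f :=
  (LipschitzWith.of_dist_le_mul (K := ⟨C, h.nonneg⟩) fun p q => by
    rw [dist_eq_norm, dist_eq_norm]
    exact (isFwdDiffBound_one_iff.1 (h.mono (by omega))).2 p q).continuous

lemma isFwdDiffBound_comp_linearIsometryEquiv [NormedSpace ℝ F] [NormedSpace ℝ G]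
    (e : F ≃ₗᵢ[ℝ] G) :
    IsFwdDiffBound m (e ∘ f) C ↔ IsFwdDiffBound m f C := by
  refine forall₂_congr fun U _ => forall_congr' fun p => ?_
  rw [show iteratedFwdDiff U (e ∘ f) p = e (iteratedFwdDiff U f p) from
    (map_iteratedFwdDiff e U f p).symm, LinearIsometryEquiv.norm_map]

lemma isFwdDiffBound_succ_of_fderiv [NormedSpace ℝ X] [NormedSpace ℝ F]
    (hf : Differentiable ℝ f) (h0 : ∀ p, ‖f p‖ ≤ C) (h : IsFwdDiffBound m (fderiv ℝ f) C) :
    IsFwdDiffBound (m + 1) f C := by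
  rintro (_ | ⟨u, U⟩) hU p
  · simpa using h0 p
  · have hU' : U.length ≤ m := by simpa using hU
    calc ‖Δ_[u] (iteratedFwdDiff U f) p‖ ≤ C * (U.map (‖·‖)).prod * ‖u‖ :=
          norm_fwdDiff_le_of_hasFDerivAt
            (hasFDerivAt_iteratedFwdDiff (fun x => (hf x).hasFDerivAt) U) (h U hU') u p
      _ = C * ((u :: U).map (‖·‖)).prod := by simp only [List.map_cons, List.prod_cons]; ring

lemma IsFwdDiffBound.fderiv [NormedSpace ℝ X] [NormedSpace ℝ F] (hf : Differentiable ℝ f)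
    (h : IsFwdDiffBound (m + 1) f C) : IsFwdDiffBound m (fderiv ℝ f) C := by
  intro U hU p
  have hprod : 0 ≤ (U.map (‖·‖)).prod := List.prod_nonneg (by simp)
  refine ContinuousLinearMap.opNorm_le_bound _ (mul_nonneg h.nonneg hprod) fun v => ?_
  have hlim : Tendsto (fun n : ℕ => iteratedFwdDiff U (dyadicDiffQuotient f · v n) p) atTop
      (𝓝 (iteratedFwdDiff U (_root_.fderiv ℝ f) p v)) := by
    rw [show iteratedFwdDiff U (_root_.fderiv ℝ f) p v =
        iteratedFwdDiff U (_root_.fderiv ℝ f · v) p from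
      map_iteratedFwdDiff (ContinuousLinearMap.apply ℝ F v) U _ p]
    refine tendsto_iteratedFwdDiff (fun x => ?_) U p
    exact (hf x).hasFDerivAt.lim v (c := fun n : ℕ => (2 : ℝ) ^ n)
      (by simpa using tendsto_pow_atTop_atTop_of_one_lt one_lt_two)
  refine le_of_tendsto' hlim.norm fun n => ?_
  set w : X := ((2 : ℝ) ^ n)⁻¹ • v
  have hquot : iteratedFwdDiff U (dyadicDiffQuotient f · v n) p =
      (2 : ℝ) ^ n • iteratedFwdDiff (U ++ [w]) f p := by
    rw [iteratedFwdDiff_append_singleton]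
    exact (map_iteratedFwdDiff (DistribSMul.toAddMonoidHom F ((2 : ℝ) ^ n)) U _ p).symm
  have hw : ‖w‖ = ((2 : ℝ) ^ n)⁻¹ * ‖v‖ := by simp [w, norm_smul]
  rw [hquot, norm_smul, norm_pow, Real.norm_two]
  calc 2 ^ n * ‖iteratedFwdDiff (U ++ [w]) f p‖
      ≤ 2 ^ n * (C * ((U ++ [w]).map (‖·‖)).prod) := by
        gcongr; exact h _ (by simpa using hU) p
    _ = C * (U.map (‖·‖)).prod * ‖v‖ := by
        simp only [List.map_append, List.prod_append, List.map_singleton, List.prod_singleton, hw]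
        field_simp

lemma IsFwdDiffBound.differentiable [NormedSpace ℝ X] [NormedSpace ℝ F] [CompleteSpace F]
    (h : IsFwdDiffBound (m + 2) f C) : Differentiable ℝ f := by
  refine differentiable_of_norm_fwdDiff_le (A := C) (B := C) (fun x v => ?_) (fun x u v => ?_)
  · simpa [iteratedFwdDiff_cons] using h [v] (by simp) x
  · simpa [iteratedFwdDiff_cons, mul_assoc] using h [u, v] (by simp) x

end FwdDiffBound

section IteratedFDeriv

variable {X F : Type*} [NormedAddCommGroup X] [NormedSpace ℝ X]
  [NormedAddCommGroup F] [NormedSpace ℝ F] {f : X → F} {C : ℝ}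

lemma isFwdDiffBound_iteratedFDeriv_zero_iff {m : ℕ} :
    IsFwdDiffBound m (iteratedFDeriv ℝ 0 f) C ↔ IsFwdDiffBound m f C := by
  rw [iteratedFDeriv_zero_eq_comp]
  exact isFwdDiffBound_comp_linearIsometryEquiv _

lemma isFwdDiffBound_iteratedFDeriv_succ_iff {k m : ℕ} :
    IsFwdDiffBound m (iteratedFDeriv ℝ (k + 1) f) C ↔
      IsFwdDiffBound m (fderiv ℝ (iteratedFDeriv ℝ k f)) C := by
  rw [iteratedFDeriv_succ_eq_comp_left]
  exact isFwdDiffBound_comp_linearIsometryEquiv (f := fderiv ℝ (iteratedFDeriv ℝ k f)) _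

lemma isFwdDiffBound_iteratedFDeriv_of_top {n m : ℕ} (hf : ContDiff ℝ n f)
    (hbound : ∀ j ≤ n, ∀ p, ‖iteratedFDeriv ℝ j f p‖ ≤ C)
    (htop : IsFwdDiffBound m (iteratedFDeriv ℝ n f) C) :
    ∀ d k, k + d = n → IsFwdDiffBound (d + m) (iteratedFDeriv ℝ k f) C
  | 0, k, hk => by subst hk; simpa using htop
  | d + 1, k, hk => by
    rw [show d + 1 + m = d + m + 1 by omega]
    refine isFwdDiffBound_succ_of_fderiv
      (hf.differentiable_iteratedFDeriv (by exact_mod_cast (by omega : k < n)))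
      (hbound k (by omega)) ?_
    exact isFwdDiffBound_iteratedFDeriv_succ_iff.1
      (isFwdDiffBound_iteratedFDeriv_of_top hf hbound htop d (k + 1) (by omega))

lemma isFwdDiffBound_of_iteratedFDeriv {n m : ℕ} (hf : ContDiff ℝ n f)
    (hbound : ∀ j ≤ n, ∀ p, ‖iteratedFDeriv ℝ j f p‖ ≤ C)
    (htop : IsFwdDiffBound m (iteratedFDeriv ℝ n f) C) : IsFwdDiffBound (n + m) f C :=
  isFwdDiffBound_iteratedFDeriv_zero_iff.1
    (isFwdDiffBound_iteratedFDeriv_of_top hf hbound htop n 0 (zero_add n))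

variable [CompleteSpace F]

lemma IsFwdDiffBound.iteratedFDeriv {k m : ℕ} (h : IsFwdDiffBound (k + m + 1) f C) :
    IsFwdDiffBound (m + 1) (iteratedFDeriv ℝ k f) C := by
  induction k generalizing m with
  | zero => exact isFwdDiffBound_iteratedFDeriv_zero_iff.2 (h.mono (by omega))
  | succ k ih =>
    have hk : IsFwdDiffBound (m + 2) (_root_.iteratedFDeriv ℝ k f) C :=
      ih (h.mono (by omega))
    exact isFwdDiffBound_iteratedFDeriv_succ_iff.2 (hk.fderiv hk.differentiable)

theorem isFwdDiffBound_succ_iff (n : ℕ) :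
    IsFwdDiffBound (n + 1) f C ↔ ContDiff ℝ n f ∧
      (∀ j ≤ n, ∀ p, ‖iteratedFDeriv ℝ j f p‖ ≤ C) ∧
      ∀ p q, ‖iteratedFDeriv ℝ n f p - iteratedFDeriv ℝ n f q‖ ≤ C * ‖p - q‖ := by
  constructor
  · intro h
    have hD : ∀ j ≤ n, IsFwdDiffBound (n - j + 1) (iteratedFDeriv ℝ j f) C :=
      fun j hj => (h.mono (by omega)).iteratedFDeriv
    refine ⟨contDiff_nat_iff_continuous_differentiable.2
      ⟨fun j hj => (hD j hj).continuous, fun j hj => ?_⟩,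
      fun j hj => (hD j hj).norm_le,
      (isFwdDiffBound_one_iff.1 ((hD n le_rfl).mono (by omega))).2⟩
    exact ((hD j hj.le).mono (by omega : (n - j - 1) + 2 ≤ n - j + 1)).differentiable
  · rintro ⟨hf, hbound, hlip⟩
    exact isFwdDiffBound_of_iteratedFDeriv hf hbound
      (isFwdDiffBound_one_iff.2 ⟨hbound n le_rfl, hlip⟩)

end IteratedFDeriv

section Pairing

variable {X W : Type*} [NormedAddCommGroup X] [NormedAddCommGroup W] [NormedSpace ℝ W]

lemma pairF_diffChain (ω : X → W →L[ℝ] ℝ) (U : List X) (p : X) (α : W) :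
    pairF (fun x β => ω x β) (diffChain U p α) = iteratedFwdDiff U ω p α := by
  induction U generalizing ω with
  | nil => simp [pairF, diffChain]
  | cons u U ih =>
    rw [diffChain, pairF, Finsupp.sum_sub_index (by simp),
      Finsupp.sum_mapDomain_index (by simp) (by simp)]
    have hshift := ih fun x => ω (x + u)
    rw [pairF, iteratedFwdDiff_comp_add_right] at hshift
    rw [hshift, ← pairF, ih, iteratedFwdDiff_cons, fwdDiff, _root_.sub_apply]

lemma isBBound_iff_isFwdDiffBound {r : ℕ} {ω : X → W →L[ℝ] ℝ} {C : ℝ} (hC : 0 ≤ C) :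
    IsBBound r (fun p α => ω p α) C ↔ IsFwdDiffBound r ω C := by
  have key : ∀ U p α,
      |pairF (fun p α => ω p α) (diffChain U p α)| = ‖iteratedFwdDiff U ω p α‖ := by
    simp [pairF_diffChain, Real.norm_eq_abs]
  refine forall_congr' fun U => ⟨fun h hU p => ?_, fun h p α hU => ?_⟩
  · refine ContinuousLinearMap.opNorm_le_bound _
      (mul_nonneg hC (List.prod_nonneg (by simp))) fun α => ?_
    simpa [key, dweight, mul_assoc] using h p α hU
  · rw [key, dweight, ← mul_assoc]
    exact (ContinuousLinearMap.le_opNorm _ α).trans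
      (mul_le_mul_of_nonneg_right (h hU p) (norm_nonneg α))

end Pairing

theorem Br_eq_Cr_lip_general (r : ℕ) (hr : 1 ≤ r) (ω : E → V →L[ℝ] ℝ) :
    ((∃ C, 0 ≤ C ∧ IsBBound r (fun p α => ω p α) C) ↔
      (∃ C, 0 ≤ C ∧ IsCBound r ω C)) ∧
    sInf {C : ℝ | 0 ≤ C ∧ IsBBound r (fun p α => ω p α) C} =
      sInf {C : ℝ | 0 ≤ C ∧ IsCBound r ω C} := by
  obtain ⟨n, rfl⟩ := Nat.exists_eq_add_of_le' hr
  have hpt : ∀ C : ℝ, (0 ≤ C ∧ IsBBound (n + 1) (fun p α => ω p α) C) ↔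
      (0 ≤ C ∧ IsCBound (n + 1) ω C) := fun C =>
    and_congr_right fun hC => (isBBound_iff_isFwdDiffBound hC).trans (isFwdDiffBound_succ_iff n)
  exact ⟨exists_congr hpt, congrArg sInf (Set.ext hpt)⟩

/-- For a bounded `k`-form `ω` on `ℝⁿ` and `r ≥ 1`, the norm
`‖ω‖_{B^r} = max{|ω|_{B⁰},…,|ω|_{B^r}}` defined via finite differences equals the norm
`‖ω‖_{C^{r−1+Lip}} = max{|ω|_{C⁰},…,|ω|_{C^{r−1}},|ω|_{L^r}}` defined via directional
derivatives and Lipschitz constants; in particular one is finite iff the other is. -/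
theorem Br_eq_Cr_lip (r : ℕ) (hr : 1 ≤ r) (ω : E → V →L[ℝ] ℝ)
    (hbdd : ∃ M : ℝ, ∀ p : E, ‖ω p‖ ≤ M) :
    ((∃ C, 0 ≤ C ∧ IsBBound r (fun p α => ω p α) C) ↔
      (∃ C, 0 ≤ C ∧ IsCBound r ω C)) ∧
    sInf {C : ℝ | 0 ≤ C ∧ IsBBound r (fun p α => ω p α) C} =
      sInf {C : ℝ | 0 ≤ C ∧ IsCBound r ω C} :=
  Br_eq_Cr_lip_general r hr ω
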